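/- For every k ∈ ℕ and every x ∈ A_k = [0, d^{-k}), the (h_k^α − 1)-th iterate of the Chacon transformation satisfies T_α^{h_k^α − 1}(x) = x + 1 − d^{-k}. -/
import Mathlib


open MeasureTheory Filter Topology Real

noncomputable section

/-- Partial sums `α^{(m-1)} = Σ_{j<m} α_j d^{-(j+1)}`. -/
def chaconPartial (d : ℕ) (a : ℕ → ℕ) (m : ℕ) : ℝ :=
  ∑ j ∈ Finset.range m, (a j : ℝ) * (d : ℝ) ^ (-(j : ℤ) - 1)

/-- `α' = Σ_{j∈ℕ} α_j d^{-(j+1)}`. -/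
def chaconSum (d : ℕ) (a : ℕ → ℕ) : ℝ :=
  ∑' j : ℕ, (a j : ℝ) * (d : ℝ) ^ (-(j : ℤ) - 1)

/-- The index `N(x)` of the unique member `Z_n` of the partition containing `x`:
for `x ∈ [0,1)` it is the unique `n` with `x ∈ [1-d^{-n}, 1-d^{-(n+1)})`, and for
`x ∈ [1, 1+α')` it is the unique `n` with `x ∈ [1+α^{(n-1)}, 1+α^{(n)})`. -/
def chaconIndex (d : ℕ) (a : ℕ → ℕ) (x : ℝ) : ℕ :=
  if x < 1 then sInf {n : ℕ | x < 1 - (d : ℝ) ^ (-(n : ℤ) - 1)}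
  else sInf {n : ℕ | x < 1 + chaconPartial d a (n + 1)}

/-- The Chacon transformation `T_α` on `[0, 1+α')`. -/
def chaconMap (d : ℕ) (a : ℕ → ℕ) (x : ℝ) : ℝ :=
  let n := chaconIndex d a x
  if x < 1 then
    if x < 1 - 2 * (d : ℝ) ^ (-(n : ℤ) - 1) then
      x - (1 - (d : ℝ) ^ (-(n : ℤ))) + (d : ℝ) ^ (-(n : ℤ) - 1)
    else
      x + 2 * (d : ℝ) ^ (-(n : ℤ) - 1) + chaconPartial d a n
  else
    if 1 + chaconPartial d a (n + 1) - (d : ℝ) ^ (-(n : ℤ) - 1) ≤ x then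
      x - (1 + chaconPartial d a (n + 1) - (d : ℝ) ^ (-(n : ℤ) - 1))
        + ((d : ℝ) - 1) * (d : ℝ) ^ (-(n : ℤ) - 1)
    else
      x + (d : ℝ) ^ (-(n : ℤ) - 1)

/-- Heights of the Rokhlin towers: `h_0 = 1`, `h_{k+1} = d h_k + α_k`. -/
def chaconHeight (d : ℕ) (a : ℕ → ℕ) : ℕ → ℕ
  | 0 => 1
  | k + 1 => d * chaconHeight d a k + a k

lemma chaconPartial_succ (d : ℕ) (a : ℕ → ℕ) (m : ℕ) :
    chaconPartial d a (m + 1)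
      = chaconPartial d a m + (a m : ℝ) * (d : ℝ) ^ (-(m : ℤ) - 1) :=
  Finset.sum_range_succ _ m

lemma chaconPartial_nonneg (d : ℕ) (a : ℕ → ℕ) (m : ℕ) : 0 ≤ chaconPartial d a m :=
  Finset.sum_nonneg fun j _ =>
    mul_nonneg (Nat.cast_nonneg _) (zpow_nonneg (Nat.cast_nonneg _) _)

lemma chaconPartial_mono (d : ℕ) (a : ℕ → ℕ) {m n : ℕ} (h : m ≤ n) :
    chaconPartial d a m ≤ chaconPartial d a n :=
  Finset.sum_le_sum_of_subset_of_nonneg (Finset.range_subset_range.2 h) fun j _ _ =>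
    mul_nonneg (Nat.cast_nonneg _) (zpow_nonneg (Nat.cast_nonneg _) _)

lemma chaconIndex_left (d : ℕ) (hd : 2 ≤ d) (a : ℕ → ℕ) (n : ℕ) (x : ℝ)
    (h1 : 1 - (d : ℝ) ^ (-(n : ℤ)) ≤ x) (h2 : x < 1 - (d : ℝ) ^ (-(n : ℤ) - 1)) :
    chaconIndex d a x = n := by
  have hd1 : (1 : ℝ) ≤ (d : ℝ) := by exact_mod_cast Nat.one_le_of_lt hd
  have hd0 : (0 : ℝ) < (d : ℝ) := by positivity
  have hx1 : x < 1 := by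
    have : (0:ℝ) < (d : ℝ) ^ (-(n : ℤ) - 1) := by positivity
    linarith
  have hmem : n ∈ {m : ℕ | x < 1 - (d : ℝ) ^ (-(m : ℤ) - 1)} := h2
  unfold chaconIndex
  rw [if_pos hx1]
  refine le_antisymm (Nat.sInf_le hmem) ?_
  by_contra h
  push_neg at h
  have hm := Nat.sInf_mem ⟨n, hmem⟩
  set m := sInf {m : ℕ | x < 1 - (d : ℝ) ^ (-(m : ℤ) - 1)} with hmdef
  have hmn : m + 1 ≤ n := h
  have hle : (-(n : ℤ)) ≤ (-(m : ℤ) - 1) := by omega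
  have : (d : ℝ) ^ (-(n : ℤ)) ≤ (d : ℝ) ^ (-(m : ℤ) - 1) := zpow_le_zpow_right₀ hd1 hle
  have hx : x < 1 - (d : ℝ) ^ (-(m : ℤ) - 1) := hm
  linarith

lemma chaconIndex_right (d : ℕ) (a : ℕ → ℕ) (ha : ∀ j, 1 ≤ a j) (n : ℕ) (x : ℝ)
    (h1 : 1 + chaconPartial d a n ≤ x) (h2 : x < 1 + chaconPartial d a (n + 1)) :
    chaconIndex d a x = n := by
  have hx1 : ¬ x < 1 := by
    have := chaconPartial_nonneg d a n; linarith
  have hmem : n ∈ {m : ℕ | x < 1 + chaconPartial d a (m + 1)} := h2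
  unfold chaconIndex
  rw [if_neg hx1]
  refine le_antisymm (Nat.sInf_le hmem) ?_
  by_contra h
  push_neg at h
  have hm := Nat.sInf_mem ⟨n, hmem⟩
  set m := sInf {m : ℕ | x < 1 + chaconPartial d a (m + 1)} with hmdef
  have hmn : m + 1 ≤ n := h
  have : chaconPartial d a (m + 1) ≤ chaconPartial d a n := chaconPartial_mono d a hmn
  have hx : x < 1 + chaconPartial d a (m + 1) := hm
  linarith

lemma chaconMap_S1 (d : ℕ) (hd : 2 ≤ d) (a : ℕ → ℕ) (n : ℕ) (x : ℝ)
    (h1 : 1 - (d : ℝ) ^ (-(n : ℤ)) ≤ x) (h2 : x < 1 - 2 * (d : ℝ) ^ (-(n : ℤ) - 1)) :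
    chaconMap d a x = x - (1 - (d : ℝ) ^ (-(n : ℤ))) + (d : ℝ) ^ (-(n : ℤ) - 1) := by
  have he : (0:ℝ) < (d : ℝ) ^ (-(n : ℤ) - 1) := by positivity
  have h2' : x < 1 - (d : ℝ) ^ (-(n : ℤ) - 1) := by linarith
  have hidx := chaconIndex_left d hd a n x h1 h2'
  have hx1 : x < 1 := by linarith
  simp only [chaconMap, hidx, if_pos hx1, if_pos h2]

lemma chaconMap_S2 (d : ℕ) (hd : 2 ≤ d) (a : ℕ → ℕ) (n : ℕ) (x : ℝ)
    (h1 : 1 - 2 * (d : ℝ) ^ (-(n : ℤ) - 1) ≤ x) (h2 : x < 1 - (d : ℝ) ^ (-(n : ℤ) - 1)) :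
    chaconMap d a x = x + 2 * (d : ℝ) ^ (-(n : ℤ) - 1) + chaconPartial d a n := by
  have he : (0:ℝ) < (d : ℝ) ^ (-(n : ℤ) - 1) := by positivity
  have hE : (d : ℝ) ^ (-(n : ℤ)) = (d : ℝ) ^ (-(n : ℤ) - 1) * d := by
    rw [← zpow_add_one₀ (by positivity : (d:ℝ) ≠ 0)]; norm_num
  have hd2 : (2:ℝ) ≤ (d:ℝ) := by exact_mod_cast hd
  have h1' : 1 - (d : ℝ) ^ (-(n : ℤ)) ≤ x := by nlinarith
  have hidx := chaconIndex_left d hd a n x h1' h2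
  have hx1 : x < 1 := by linarith
  simp only [chaconMap, hidx, if_pos hx1, if_neg (not_lt.2 h1)]

lemma chaconMap_S3 (d : ℕ) (a : ℕ → ℕ) (ha : ∀ j, 1 ≤ a j) (n : ℕ) (x : ℝ)
    (h1 : 1 + chaconPartial d a (n + 1) - (d : ℝ) ^ (-(n : ℤ) - 1) ≤ x)
    (h2 : x < 1 + chaconPartial d a (n + 1)) :
    chaconMap d a x = x - (1 + chaconPartial d a (n + 1) - (d : ℝ) ^ (-(n : ℤ) - 1))
        + ((d : ℝ) - 1) * (d : ℝ) ^ (-(n : ℤ) - 1) := by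
  have he : (0:ℝ) ≤ (d : ℝ) ^ (-(n : ℤ) - 1) := by positivity
  have han : (1:ℝ) ≤ (a n : ℝ) := by exact_mod_cast ha n
  have hstep : chaconPartial d a n + (d : ℝ) ^ (-(n : ℤ) - 1) ≤ chaconPartial d a (n + 1) := by
    rw [chaconPartial_succ]; nlinarith
  have h1' : 1 + chaconPartial d a n ≤ x := by linarith
  have hidx := chaconIndex_right d a ha n x h1' h2
  have hx1 : ¬ x < 1 := by
    have := chaconPartial_nonneg d a n; linarith
  simp only [chaconMap, hidx, if_neg hx1, if_pos h1]

lemma chaconMap_S4 (d : ℕ) (a : ℕ → ℕ) (ha : ∀ j, 1 ≤ a j) (n : ℕ) (x : ℝ)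
    (han : a n = 2)
    (h1 : 1 + chaconPartial d a n ≤ x)
    (h2 : x < 1 + chaconPartial d a n + (d : ℝ) ^ (-(n : ℤ) - 1)) :
    chaconMap d a x = x + (d : ℝ) ^ (-(n : ℤ) - 1) := by
  have he : (0:ℝ) ≤ (d : ℝ) ^ (-(n : ℤ) - 1) := by positivity
  have hstep : chaconPartial d a (n + 1)
      = chaconPartial d a n + 2 * (d : ℝ) ^ (-(n : ℤ) - 1) := by
    rw [chaconPartial_succ, han]; push_cast; ring
  have h2' : x < 1 + chaconPartial d a (n + 1) := by rw [hstep]; linarith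
  have hidx := chaconIndex_right d a ha n x h1 h2'
  have hx1 : ¬ x < 1 := by
    have := chaconPartial_nonneg d a n; linarith
  have hc : ¬ (1 + chaconPartial d a (n + 1) - (d : ℝ) ^ (-(n : ℤ) - 1) ≤ x) := by
    rw [hstep]; push_neg; linarith
  simp only [chaconMap, hidx, if_neg hx1, if_neg hc]

lemma chaconHeight_pos (d : ℕ) (hd : 1 ≤ d) (a : ℕ → ℕ) (k : ℕ) :
    1 ≤ chaconHeight d a k := by
  induction k with
  | zero => simp [chaconHeight]
  | succ k ih =>
    have h2 := Nat.mul_le_mul hd ih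
    rw [show chaconHeight d a (k + 1) = d * chaconHeight d a k + a k from rfl]
    exact le_trans (by simpa using h2) (Nat.le_add_right _ _)

/-- For every `k ∈ ℕ` and every `x ∈ A_k = [0, d^{-k})`,
`T_α^{h_k^α − 1}(x) = x + 1 − d^{-k}`. -/
theorem chacon_iterate_height (d : ℕ) (hd_odd : Odd d) (hd7 : 7 ≤ d)
    (a : ℕ → ℕ) (ha : ∀ j, a j = 1 ∨ a j = 2)
    (k : ℕ) (x : ℝ) (hx₀ : 0 ≤ x) (hx₁ : x < (d : ℝ) ^ (-(k : ℤ))) :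
    (chaconMap d a)^[chaconHeight d a k - 1] x = x + 1 - (d : ℝ) ^ (-(k : ℤ)) := by
  have hd2 : 2 ≤ d := by omega
  have ha1 : ∀ j, 1 ≤ a j := fun j => by rcases ha j with h | h <;> omega
  induction k generalizing x with
  | zero => simp [chaconHeight]
  | succ k ih =>
    set T := chaconMap d a with hT
    set h := chaconHeight d a k with hh
    have hpos : 1 ≤ h := chaconHeight_pos d (by omega) a k
    have hdR : (7:ℝ) ≤ (d:ℝ) := by exact_mod_cast hd7
    have hd0 : (0:ℝ) < (d:ℝ) := by linarith
    set e : ℝ := (d : ℝ) ^ (-(k : ℤ) - 1) with he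
    set P : ℕ → ℝ := chaconPartial d a with hP
    have he0 : 0 < e := by rw [he]; positivity
    have hE : (d : ℝ) ^ (-(k : ℤ)) = (d:ℝ) * e := by
      rw [he, mul_comm, ← zpow_add_one₀ (ne_of_gt hd0)]
      norm_num
    have hcast : (d : ℝ) ^ (-((k+1 : ℕ) : ℤ)) = e := by
      rw [he]; congr 1; push_cast; ring
    rw [hcast] at hx₁
    -- climbing a full subtower
    have climb : ∀ y : ℝ, 0 ≤ y → y < (d:ℝ) * e → T^[h - 1] y = y + 1 - (d:ℝ) * e := by
      intro y hy0 hy1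
      rw [← hE] at hy1 ⊢
      exact ih y hy0 hy1
    -- moving through columns 0, ..., d-2
    have col : ∀ i : ℕ, i ≤ d - 2 → T^[i * h] x = x + i * e := by
      intro i hi
      induction i with
      | zero => simp
      | succ i ih2 =>
        have hstep := ih2 (by omega)
        have hiR : (i:ℝ) + 3 ≤ (d:ℝ) := by exact_mod_cast (by omega : i + 3 ≤ d)
        have hie : (0:ℝ) ≤ (i:ℝ) * e := mul_nonneg (Nat.cast_nonneg i) he0.le
        have hy0 : 0 ≤ x + (i:ℝ) * e := by linarith
        have hy1 : x + (i:ℝ) * e < (d:ℝ) * e := by nlinarith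
        have hclimb := climb _ hy0 hy1
        have htop : T (x + (i:ℝ)*e + 1 - (d:ℝ)*e) = x + ((i:ℝ)+1)*e := by
          have hb1 : 1 - (d:ℝ)^(-(k:ℤ)) ≤ x + (i:ℝ)*e + 1 - (d:ℝ)*e := by
            rw [hE]; linarith
          have hb2 : x + (i:ℝ)*e + 1 - (d:ℝ)*e < 1 - 2*(d:ℝ)^(-(k:ℤ)-1) := by
            rw [← he]; nlinarith
          have hS := chaconMap_S1 d hd2 a k _ hb1 hb2
          rw [hT, hS, hE, ← he]; ring
        have hcount : (i+1)*h = 1 + ((h-1) + i*h) := by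
          have h1 : h - 1 + 1 = h := Nat.sub_add_cancel hpos
          calc (i+1)*h = i*h + h := by ring
            _ = i*h + (h - 1 + 1) := by rw [h1]
            _ = 1 + ((h-1) + i*h) := by ring
        rw [hcount, Function.iterate_add_apply, Function.iterate_add_apply,
          hstep, hclimb, Function.iterate_one, htop]
        push_cast; ring
    -- reach the base of column d-2, climb it, enter the spacers
    have hdc : ((d - 2 : ℕ) : ℝ) = (d:ℝ) - 2 := by
      push_cast [Nat.cast_sub hd2]; ring
    have hA : T^[(d-2) * h] x = x + ((d:ℝ)-2) * e := by
      rw [col (d-2) le_rfl, hdc]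
    have hde2 : ((d:ℝ)-2)*e = (d:ℝ)*e - 2*e := by ring
    have hB : T^[h-1] (x + ((d:ℝ)-2)*e) = x + ((d:ℝ)-2)*e + 1 - (d:ℝ)*e :=
      climb _ (by nlinarith) (by nlinarith)
    have hC : T (x + ((d:ℝ)-2)*e + 1 - (d:ℝ)*e) = x + 1 + P k := by
      have hb1 : 1 - 2*(d:ℝ)^(-(k:ℤ)-1) ≤ x + ((d:ℝ)-2)*e + 1 - (d:ℝ)*e := by
        rw [← he]; linarith
      have hb2 : x + ((d:ℝ)-2)*e + 1 - (d:ℝ)*e < 1 - (d:ℝ)^(-(k:ℤ)-1) := by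
        rw [← he]; linarith
      have hS := chaconMap_S2 d hd2 a k _ hb1 hb2
      rw [hT, hS, ← he, ← hP]; ring
    -- through the spacer(s)
    have hPk : P (k+1) = P k + (a k : ℝ) * e := by
      rw [hP, he]; exact chaconPartial_succ d a k
    have hPk0 : 0 ≤ P k := chaconPartial_nonneg d a k
    have hD : T^[a k] (x + 1 + P k) = x + ((d:ℝ)-1)*e := by
      rcases ha k with h1 | h2
      · rw [h1, Function.iterate_one]
        have hPk1 : P (k+1) = P k + e := by rw [hPk, h1]; push_cast; ring
        have hb1 : 1 + chaconPartial d a (k+1) - (d:ℝ)^(-(k:ℤ)-1) ≤ x + 1 + P k := by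
          rw [← he, ← hP, hPk1]; linarith
        have hb2 : x + 1 + P k < 1 + chaconPartial d a (k+1) := by
          rw [← hP, hPk1]; linarith
        have hS := chaconMap_S3 d a ha1 k _ hb1 hb2
        rw [hT, hS, ← he, ← hP, hPk1]; ring
      · rw [h2]
        have hPk1 : P (k+1) = P k + 2*e := by rw [hPk, h2]; push_cast; ring
        have hb1 : 1 + chaconPartial d a k ≤ x + 1 + P k := by rw [← hP]; linarith
        have hb2 : x + 1 + P k < 1 + chaconPartial d a k + (d:ℝ)^(-(k:ℤ)-1) := by
          rw [← he, ← hP]; linarith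
        have hS4 := chaconMap_S4 d a ha1 k _ h2 hb1 hb2
        have step1 : T (x + 1 + P k) = x + 1 + P k + e := by rw [hT, hS4, ← he]
        have hb3 : 1 + chaconPartial d a (k+1) - (d:ℝ)^(-(k:ℤ)-1) ≤ x + 1 + P k + e := by
          rw [← he, ← hP, hPk1]; linarith
        have hb4 : x + 1 + P k + e < 1 + chaconPartial d a (k+1) := by
          rw [← hP, hPk1]; linarith
        have hS3 := chaconMap_S3 d a ha1 k _ hb3 hb4
        show T (T (x + 1 + P k)) = _
        rw [step1, hT, hS3, ← he, ← hP, hPk1]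
        ring
    -- climb the last column
    have hF : T^[h-1] (x + ((d:ℝ)-1)*e) = x + 1 - e := by
      have hde1 : ((d:ℝ)-1)*e = (d:ℝ)*e - e := by ring
      rw [climb _ (by nlinarith) (by nlinarith)]
      ring
    -- assemble
    have e2 : d * h = (d-2)*h + 2*h := by
      rw [← Nat.add_mul]
      congr 1
      omega
    have hcount : chaconHeight d a (k+1) - 1
        = (h-1) + (a k + (1 + ((h-1) + (d-2)*h))) := by
      rw [show chaconHeight d a (k+1) = d * chaconHeight d a k + a k from rfl, ← hh, e2]
      generalize (d-2)*h = A
      omega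
    rw [hcount, Function.iterate_add_apply, Function.iterate_add_apply,
      Function.iterate_add_apply, Function.iterate_add_apply,
      hA, hB, Function.iterate_one, hC, hD, hF, hcast]

end
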